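/- arXiv:1610.06427 — 7 statements merged into one kernel-verified Lean document; each statement's English description precedes it below -/
import Mathlib

section
/- Let C be a v×v real symmetric positive semidefinite matrix, and let Q be a v×s real matrix whose column space equals the column space of C. Let P be the orthogonal projection matrix onto the column space of C, and set W = I_v − P + QQᵀ (which is symmetric positive definite). Then the matrices N = (Qᵀ C⁺ Q)⁺ (an s×s matrix) and M = W^{−1/2} C W^{−1/2} (a v×v matrix, where W^{−1/2} is the inverse of the positive definite square root of W) have the same nonzero eigenvalues including multiplicities; that is, for every real λ ≠ 0, the dimension of the kernel of N − λ·I_s equals the dimension of the kernel of M − λ·I_v. -/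
/-!
With `W = 1 - P + Q Qᵀ` one has `P W = W P = Q Qᵀ`, hence `Q Qᵀ W⁻¹ = W⁻¹ Q Qᵀ = P`; together with
`C C⁺ = C⁺ C = P` this lets one verify the four Penrose equations for
`(Qᵀ C⁺ Q, Qᵀ W⁻¹ C W⁻¹ Q)`, so `N = Qᵀ W⁻¹ C W⁻¹ Q`. Then `N = Y X` and `M = X Y` for
`X = W^{-1/2} Q` and `Y = Qᵀ W⁻¹ C W^{-1/2}`, and for `μ ≠ 0` the map `X` embeds the
`μ`-eigenspace of `Y X` into that of `X Y` (and symmetrically).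
-/

open Matrix

/-- The column space of a real matrix. -/
def colSpace {m n : ℕ} (A : Matrix (Fin m) (Fin n) ℝ) : Submodule ℝ (Fin m → ℝ) :=
  LinearMap.range A.mulVecLin

/-- `B` is the Moore–Penrose pseudoinverse of `A`. -/
def IsMPInv {m n : ℕ} (A : Matrix (Fin m) (Fin n) ℝ) (B : Matrix (Fin n) (Fin m) ℝ) : Prop :=
  A * B * A = A ∧ B * A * B = B ∧ (A * B)ᵀ = A * B ∧ (B * A)ᵀ = B * A

section Eigenspace

variable {K : Type*} [Field K] {m n : Type*} [Fintype m] [Fintype n] [DecidableEq m]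
  [DecidableEq n]

lemma mem_ker_sub_smul_one_iff (A : Matrix n n K) (μ : K) (u : n → K) :
    u ∈ LinearMap.ker ((A - μ • 1).mulVecLin) ↔ A *ᵥ u = μ • u := by
  rw [LinearMap.mem_ker, mulVecLin_apply, sub_mulVec, sub_eq_zero, smul_mulVec, one_mulVec]

lemma finrank_ker_mul_sub_smul_le (X : Matrix m n K) (Y : Matrix n m K) {μ : K} (hμ : μ ≠ 0) :
    Module.finrank K (LinearMap.ker ((Y * X - μ • 1).mulVecLin)) ≤
      Module.finrank K (LinearMap.ker ((X * Y - μ • 1).mulVecLin)) := by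
  have hmaps : ∀ u ∈ LinearMap.ker ((Y * X - μ • 1).mulVecLin),
      X *ᵥ u ∈ LinearMap.ker ((X * Y - μ • 1).mulVecLin) := by
    intro u hu
    rw [mem_ker_sub_smul_one_iff] at hu ⊢
    rw [← mulVec_mulVec, mulVec_mulVec u Y X, hu, mulVec_smul]
  let f := LinearMap.codRestrict _ (X.mulVecLin.domRestrict _) fun u => hmaps u u.2
  refine LinearMap.finrank_le_finrank_of_injective (f := f) ?_
  rw [← LinearMap.ker_eq_bot, LinearMap.ker_eq_bot']
  rintro ⟨u, hu⟩ hXu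
  replace hXu : X *ᵥ u = 0 := congrArg Subtype.val hXu
  rw [mem_ker_sub_smul_one_iff, ← mulVec_mulVec, hXu, mulVec_zero, eq_comm,
    smul_eq_zero_iff_right hμ] at hu
  exact Subtype.ext hu

lemma finrank_ker_mul_sub_smul_comm (X : Matrix m n K) (Y : Matrix n m K) {μ : K} (hμ : μ ≠ 0) :
    Module.finrank K (LinearMap.ker ((Y * X - μ • 1).mulVecLin)) =
      Module.finrank K (LinearMap.ker ((X * Y - μ • 1).mulVecLin)) :=
  (finrank_ker_mul_sub_smul_le X Y hμ).antisymm (finrank_ker_mul_sub_smul_le Y X hμ)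

end Eigenspace

section ColSpace

variable {m n p : ℕ}

lemma colSpace_mul_le (A : Matrix (Fin m) (Fin n) ℝ) (B : Matrix (Fin n) (Fin p) ℝ) :
    colSpace (A * B) ≤ colSpace A := by
  rintro _ ⟨y, rfl⟩
  exact ⟨B *ᵥ y, mulVec_mulVec y A B⟩

lemma mul_eq_self_of_colSpace_le {P : Matrix (Fin m) (Fin m) ℝ} (hP : IsIdempotentElem P)
    {A : Matrix (Fin m) (Fin n) ℝ} (h : colSpace A ≤ colSpace P) : P * A = A := by
  refine mulVec_injective (funext fun x => ?_)
  obtain ⟨y, hy⟩ := h ⟨x, rfl⟩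
  simp only [mulVecLin_apply] at hy
  rw [← mulVec_mulVec, ← hy, mulVec_mulVec, hP.eq]

lemma eq_of_colSpace_eq {P P' : Matrix (Fin m) (Fin m) ℝ} (hP : Pᵀ = P) (hPi : IsIdempotentElem P)
    (hP' : P'ᵀ = P') (hP'i : IsIdempotentElem P') (h : colSpace P = colSpace P') : P = P' := by
  calc P = P' * P := (mul_eq_self_of_colSpace_le hP'i h.le).symm
    _ = (P * P')ᵀ := by rw [transpose_mul, hP, hP']
    _ = P' := by rw [mul_eq_self_of_colSpace_le hPi h.ge, hP']

end ColSpace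

namespace IsMPInv

variable {m n : ℕ} {A : Matrix (Fin m) (Fin n) ℝ} {B B' : Matrix (Fin n) (Fin m) ℝ}

lemma transpose (h : IsMPInv A B) : IsMPInv Aᵀ Bᵀ := by
  obtain ⟨h₁, h₂, h₃, h₄⟩ := h
  refine ⟨?_, ?_, ?_, ?_⟩
  · rw [← transpose_mul, ← transpose_mul, ← Matrix.mul_assoc, h₁]
  · rw [← transpose_mul, ← transpose_mul, ← Matrix.mul_assoc, h₂]
  · rw [← transpose_mul, transpose_transpose, h₄]
  · rw [← transpose_mul, transpose_transpose, h₃]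

lemma mul_eq_mul (h : IsMPInv A B) (h' : IsMPInv A B') : A * B = A * B' :=
  calc A * B = (A * B') * (A * B) := by rw [← Matrix.mul_assoc, h'.1]
    _ = ((A * B) * (A * B'))ᵀ := by rw [transpose_mul, h.2.2.1, h'.2.2.1]
    _ = A * B' := by rw [← Matrix.mul_assoc, h.1, h'.2.2.1]

theorem unique (h : IsMPInv A B) (h' : IsMPInv A B') : B = B' := by
  have hBA : B * A = B' * A := by
    simpa only [transpose_mul, transpose_transpose] using
      congrArg Matrix.transpose (h.transpose.mul_eq_mul h'.transpose)
  calc B = B * A * B := h.2.1.symm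
    _ = B' * A * B' := by rw [hBA, Matrix.mul_assoc, h.mul_eq_mul h', ← Matrix.mul_assoc]
    _ = B' := h'.2.1

lemma colSpace_mul (h : IsMPInv A B) : colSpace (A * B) = colSpace A :=
  (colSpace_mul_le A B).antisymm (by simpa only [h.1] using colSpace_mul_le (A * B) A)

lemma mul_eq_of_colSpace_eq {P : Matrix (Fin m) (Fin m) ℝ} (h : IsMPInv A B) (hP : Pᵀ = P)
    (hPi : IsIdempotentElem P) (hPA : colSpace P = colSpace A) : A * B = P :=
  eq_of_colSpace_eq h.2.2.1 (by rw [IsIdempotentElem, ← Matrix.mul_assoc, h.1]) hP hPi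
    (h.colSpace_mul.trans hPA.symm)

end IsMPInv

section Reassociate

-- Cancellation rules inside right-associated products, for `simp only [Matrix.mul_assoc, …]`.

variable {α : Type*} [Semiring α] {l m n o p : Type*} [Fintype m] [Fintype n] [Fintype o]

lemma Matrix.mul_mul_eq_of_mul_eq {A : Matrix l m α} {B : Matrix m n α} {D : Matrix l n α}
    (h : A * B = D) (Z : Matrix n p α) : A * (B * Z) = D * Z := by
  rw [← Matrix.mul_assoc, h]

lemma Matrix.mul_mul_mul_eq_of_mul_mul_eq {A : Matrix l m α} {B : Matrix m n α}
    {E : Matrix n o α} {D : Matrix l o α} (h : A * B * E = D) (Z : Matrix o p α) :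
    A * (B * (E * Z)) = D * Z := by
  rw [← h, Matrix.mul_assoc, Matrix.mul_assoc]

end Reassociate

lemma isMPInv_transpose_mul_mul {v s : ℕ} {C Cp P Wi : Matrix (Fin v) (Fin v) ℝ}
    {Q : Matrix (Fin v) (Fin s) ℝ} (hCp : IsMPInv C Cp) (hCCp : C * Cp = P) (hCpC : Cp * C = P)
    (hP : Pᵀ = P) (hPQ : P * Q = Q) (hWi : Wiᵀ = Wi) (hQWi : Q * Qᵀ * Wi = P) :
    IsMPInv (Qᵀ * Cp * Q) (Qᵀ * Wi * C * Wi * Q) := by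
  have hWiQ : Wi * Q * Qᵀ = P := by
    simpa only [transpose_mul, transpose_transpose, hWi, hP, Matrix.mul_assoc] using
      congrArg transpose hQWi
  have hQP : Qᵀ * P = Qᵀ := by simpa only [transpose_mul, hP] using congrArg transpose hPQ
  have hPC : P * C = C := by rw [← hCCp, hCp.1]
  have hPCp : P * Cp = Cp := by rw [← hCpC, hCp.2.1]
  have hCpP : Cp * P = Cp := by rw [← hCCp, ← Matrix.mul_assoc, hCp.2.1]
  have hsymm : (Qᵀ * Wi * Q)ᵀ = Qᵀ * Wi * Q := by
    rw [transpose_mul, transpose_mul, transpose_transpose, hWi, Matrix.mul_assoc]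
  have hAB : Qᵀ * Cp * Q * (Qᵀ * Wi * C * Wi * Q) = Qᵀ * Wi * Q := by
    simp only [Matrix.mul_assoc, mul_mul_mul_eq_of_mul_mul_eq hQWi, mul_mul_eq_of_mul_eq hCpP,
      mul_mul_eq_of_mul_eq hCpC, mul_mul_eq_of_mul_eq hQP]
  have hBA : Qᵀ * Wi * C * Wi * Q * (Qᵀ * Cp * Q) = Qᵀ * Wi * Q := by
    simp only [Matrix.mul_assoc, mul_mul_mul_eq_of_mul_mul_eq hWiQ, mul_mul_eq_of_mul_eq hCCp,
      hPQ, mul_mul_eq_of_mul_eq hPCp]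
  refine ⟨?_, ?_, hAB ▸ hsymm, hBA ▸ hsymm⟩
  · rw [hAB]
    simp only [Matrix.mul_assoc, mul_mul_mul_eq_of_mul_mul_eq hWiQ, mul_mul_eq_of_mul_eq hPCp]
  · rw [hBA]
    simp only [Matrix.mul_assoc, mul_mul_mul_eq_of_mul_mul_eq hQWi, mul_mul_eq_of_mul_eq hPC]

lemma mul_mul_inv_weight_eq {v s : ℕ} {P : Matrix (Fin v) (Fin v) ℝ}
    {Q : Matrix (Fin v) (Fin s) ℝ} (hP : IsIdempotentElem P) (hPQ : P * Q = Q)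
    (hW : IsUnit (1 - P + Q * Qᵀ)) : Q * Qᵀ * (1 - P + Q * Qᵀ)⁻¹ = P := by
  have hPW : P * (1 - P + Q * Qᵀ) = Q * Qᵀ := by
    rw [mul_add, mul_sub, mul_one, hP.eq, ← Matrix.mul_assoc, hPQ, sub_self, zero_add]
  calc Q * Qᵀ * (1 - P + Q * Qᵀ)⁻¹ = P * (1 - P + Q * Qᵀ) * (1 - P + Q * Qᵀ)⁻¹ := by rw [hPW]
    _ = P := by
      rw [Matrix.mul_assoc, mul_nonsing_inv _ ((isUnit_iff_isUnit_det _).mp hW), mul_one]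

theorem stmt0 (v s : ℕ) (C : Matrix (Fin v) (Fin v) ℝ) (hC : C.PosSemidef)
    (Q : Matrix (Fin v) (Fin s) ℝ) (hQ : colSpace Q = colSpace C)
    (P : Matrix (Fin v) (Fin v) ℝ) (hPsymm : Pᵀ = P) (hPidem : P * P = P)
    (hPrange : colSpace P = colSpace C)
    (Cp : Matrix (Fin v) (Fin v) ℝ) (hCp : IsMPInv C Cp)
    (N : Matrix (Fin s) (Fin s) ℝ) (hN : IsMPInv (Qᵀ * Cp * Q) N)
    (Wsq : Matrix (Fin v) (Fin v) ℝ) (hWsq : Wsq.PosDef)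
    (hWsqW : Wsq * Wsq = 1 - P + Q * Qᵀ) :
    (1 - P + Q * Qᵀ).PosDef ∧
      ∀ μ : ℝ, μ ≠ 0 →
        Module.finrank ℝ (LinearMap.ker ((N - μ • 1).mulVecLin)) =
          Module.finrank ℝ (LinearMap.ker ((Wsq⁻¹ * C * Wsq⁻¹ - μ • 1).mulVecLin)) := by
  have hCsymm : Cᵀ = C := (isHermitian_iff_isSymm.mp hC.isHermitian).eq
  have hW : (1 - P + Q * Qᵀ).PosDef := by
    simpa only [hWsq.isHermitian.eq, hWsqW] using
      PosDef.conjTranspose_mul_self Wsq (mulVec_injective_of_isUnit hWsq.isUnit)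
  refine ⟨hW, fun μ hμ => ?_⟩
  have hCCp : C * Cp = P := hCp.mul_eq_of_colSpace_eq hPsymm hPidem hPrange
  have hCpC : Cp * C = P := by
    have hCpt : IsMPInv C Cpᵀ := hCsymm ▸ hCp.transpose
    rw [← hCp.2.2.2, transpose_mul, hCsymm, hCpt.mul_eq_of_colSpace_eq hPsymm hPidem hPrange]
  have hPQ : P * Q = Q := mul_eq_self_of_colSpace_le hPidem (hQ.trans hPrange.symm).le
  have hQW : Q * Qᵀ * (1 - P + Q * Qᵀ)⁻¹ = P := mul_mul_inv_weight_eq hPidem hPQ hW.isUnit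
  have hWinv : (1 - P + Q * Qᵀ)⁻¹ = Wsq⁻¹ * Wsq⁻¹ := by rw [← hWsqW, Matrix.mul_inv_rev]
  have hNeq : N = Qᵀ * (1 - P + Q * Qᵀ)⁻¹ * C * (1 - P + Q * Qᵀ)⁻¹ * Q :=
    hN.unique (isMPInv_transpose_mul_mul hCp hCCp hCpC hPsymm hPQ
      (isHermitian_iff_isSymm.mp hW.inv.isHermitian).eq hQW)
  have hYX : Qᵀ * (1 - P + Q * Qᵀ)⁻¹ * C * Wsq⁻¹ * (Wsq⁻¹ * Q) = N := by
    rw [hNeq, hWinv]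
    simp only [Matrix.mul_assoc]
  have hXY : Wsq⁻¹ * Q * (Qᵀ * (1 - P + Q * Qᵀ)⁻¹ * C * Wsq⁻¹) = Wsq⁻¹ * C * Wsq⁻¹ := by
    simp only [Matrix.mul_assoc, mul_mul_mul_eq_of_mul_mul_eq hQW,
      mul_mul_eq_of_mul_eq (hCCp ▸ hCp.1)]
  rw [← hYX, ← hXY]
  exact finrank_ker_mul_sub_smul_comm _ _ hμ
end

section
/- Let C be a v×v real symmetric positive semidefinite matrix, let W be a v×v real symmetric positive semidefinite matrix of rank d with column space contained in the column space of C, and let K be a v×d real matrix of rank d with K Kᵀ = W. Then the d×d matrix C_W = (Kᵀ C⁺ K)^{−1} is well defined (Kᵀ C⁺ K is positive definite), and for every nonzero vector q in the column space of W, the weighted variance (qᵀ W⁺ q)^{−1} · (qᵀ C⁺ q) is a convex combination of the reciprocals of the eigenvalues of C_W; that is, there exist nonnegative reals g_1, …, g_d with g_1 + … + g_d = 1 such that (qᵀ W⁺ q)^{−1} · (qᵀ C⁺ q) = Σ_{i=1}^d g_i · λ_i(C_W)^{−1}, where λ_1(C_W), …, λ_d(C_W) are the eigenvalues of C_W. 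-/
open Matrix

/-!
Since `W = K Kᵀ` with `K` injective, `Kᵀ W⁺ K = 1` and every `q ∈ C(W)` is `K x`, so the weighted
variance is the Rayleigh quotient `xᵀ A x / xᵀ x` of `A = Kᵀ C⁺ K`. Writing `A⁻¹ = U diag(λ) Uᵀ`
with `U` orthogonal and `w = Uᵀ x`, this quotient is `Σ λᵢ⁻¹ wᵢ² / Σ wᵢ²`, a convex combination of
the `λᵢ⁻¹`. For positive definiteness, the columns of `K` lie in `C(C)`, so `K = C M` and
`A = Mᵀ C M`, whose quadratic form vanishes only where `C M x = K x = 0`.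
-/

lemma Matrix.mulVec_injective_of_rank_eq_card {R : Type*} [Field R] {m n : Type*} [Fintype m]
    [Fintype n] (A : Matrix m n R) (h : A.rank = Fintype.card n) :
    Function.Injective A.mulVec := by
  have hsum := A.mulVecLin.finrank_range_add_finrank_ker
  rw [← Matrix.rank, h, Module.finrank_fintype_fun_eq_card] at hsum
  have hker : LinearMap.ker A.mulVecLin = ⊥ := Submodule.finrank_eq_zero.mp (by omega)
  exact LinearMap.ker_eq_bot.mp hker

lemma colSpace_mul_transpose_self {m n : ℕ} (A : Matrix (Fin m) (Fin n) ℝ) :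
    colSpace (A * Aᵀ) = colSpace A := by
  refine Submodule.eq_of_le_of_finrank_eq ?_ (rank_self_mul_transpose A)
  rw [colSpace, colSpace, mulVecLin_mul]
  exact LinearMap.range_comp_le_range _ _

lemma exists_mul_eq_of_colSpace_le {m n k : ℕ} {C : Matrix (Fin m) (Fin n) ℝ}
    {K : Matrix (Fin m) (Fin k) ℝ} (h : colSpace K ≤ colSpace C) :
    ∃ M : Matrix (Fin n) (Fin k) ℝ, C * M = K := by
  have hcols (j : Fin k) : ∃ z, C *ᵥ z = K.col j := by
    simpa [colSpace] using h ⟨Pi.single j 1, rfl⟩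
  choose M hM using hcols
  refine ⟨(of M)ᵀ, ?_⟩
  ext i j
  simpa [mul_apply, mulVec, dotProduct] using congrFun (hM j) i

open scoped ComplexOrder in
lemma Matrix.PosSemidef.posDef_conjTranspose_mul_mul {𝕜 : Type*} [RCLike 𝕜] {n m : Type*}
    [Fintype n] [Fintype m] {A : Matrix n n 𝕜} (hA : A.PosSemidef) {B : Matrix n m 𝕜}
    (hAB : Function.Injective (A * B).mulVec) : (Bᴴ * A * B).PosDef := by
  refine .of_dotProduct_mulVec_pos (isHermitian_conjTranspose_mul_mul B hA.1) fun x hx => ?_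
  have hABx : A *ᵥ (B *ᵥ x) ≠ 0 := by
    rw [mulVec_mulVec]
    exact fun h => hx (hAB (h.trans (mulVec_zero _).symm))
  have hform : star x ⬝ᵥ (Bᴴ * A * B) *ᵥ x = star (B *ᵥ x) ⬝ᵥ A *ᵥ (B *ᵥ x) := by
    simp only [star_mulVec, dotProduct_mulVec, vecMul_vecMul, mulVec_mulVec, Matrix.mul_assoc]
  rw [hform]
  exact (hA.dotProduct_mulVec_nonneg _).lt_of_ne
    fun h => hABx ((hA.dotProduct_mulVec_zero_iff _).mp h.symm)

lemma mulVec_dotProduct_mulVec_mulVec {R : Type*} [CommSemiring R] {m n : Type*} [Fintype m]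
    [Fintype n] (A : Matrix m n R) (N : Matrix m m R) (x : n → R) :
    A *ᵥ x ⬝ᵥ N *ᵥ A *ᵥ x = x ⬝ᵥ (Aᵀ * N * A) *ᵥ x := by
  simp only [dotProduct_mulVec, ← vecMul_vecMul, vecMul_transpose]

section GeneralizedInverse

variable {m n : ℕ} {K : Matrix (Fin m) (Fin n) ℝ}

lemma transpose_mul_mul_eq_one_of_mul_transpose_mul (hK : Function.Injective K.mulVec)
    {Wp : Matrix (Fin m) (Fin m) ℝ} (hWp : K * Kᵀ * Wp * (K * Kᵀ) = K * Kᵀ) :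
    Kᵀ * Wp * K = 1 := by
  have hG : IsUnit (Kᵀ * K) := by
    simpa [conjTranspose_eq_transpose_of_trivial] using (PosDef.conjTranspose_mul_self K hK).isUnit
  refine hG.mul_left_cancel (hG.mul_right_cancel ?_)
  calc Kᵀ * K * (Kᵀ * Wp * K) * (Kᵀ * K) = Kᵀ * (K * Kᵀ * Wp * (K * Kᵀ)) * K := by
        simp only [Matrix.mul_assoc]
    _ = Kᵀ * K * 1 * (Kᵀ * K) := by rw [hWp]; simp only [Matrix.mul_assoc, Matrix.mul_one]

lemma posDef_transpose_mul_mul_of_colSpace_le {C Cp : Matrix (Fin m) (Fin m) ℝ}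
    (hC : C.PosSemidef) (hCp : C * Cp * C = C) (hK : Function.Injective K.mulVec)
    (hKC : colSpace K ≤ colSpace C) : (Kᵀ * Cp * K).PosDef := by
  obtain ⟨M, rfl⟩ := exists_mul_eq_of_colSpace_le hKC
  have hCt : Cᵀ = C := by simpa [conjTranspose_eq_transpose_of_trivial] using hC.1.eq
  have hform : (C * M)ᵀ * Cp * (C * M) = Mᴴ * C * M := by
    calc (C * M)ᵀ * Cp * (C * M) = Mᵀ * (C * Cp * C) * M := by
          simp only [transpose_mul, hCt, Matrix.mul_assoc]
      _ = Mᴴ * C * M := by rw [hCp, conjTranspose_eq_transpose_of_trivial]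
  rw [hform]
  exact hC.posDef_conjTranspose_mul_mul hK

end GeneralizedInverse

section Spectral

variable {n : Type*} [Fintype n]

lemma dotProduct_mulVec_mul_diagonal_mul_transpose {m : Type*} [Fintype m] [DecidableEq m]
    (U : Matrix n m ℝ) (f : m → ℝ) (x : n → ℝ) :
    x ⬝ᵥ (U * diagonal f * Uᵀ) *ᵥ x = ∑ i, f i * (Uᵀ *ᵥ x) i ^ 2 := by
  rw [← mulVec_mulVec, ← mulVec_mulVec, dotProduct_mulVec, ← mulVec_transpose]
  simp only [dotProduct, mulVec_diagonal]
  exact Finset.sum_congr rfl fun i _ => by ring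

lemma exists_convex_weights_dotProduct_mulVec [DecidableEq n] {m : Type*} [Fintype m]
    [DecidableEq m] {U : Matrix n m ℝ} (hU : U * Uᵀ = 1) (f : m → ℝ) {x : n → ℝ} (hx : x ≠ 0) :
    ∃ g : m → ℝ, (∀ i, 0 ≤ g i) ∧ ∑ i, g i = 1 ∧
      (x ⬝ᵥ x)⁻¹ * (x ⬝ᵥ (U * diagonal f * Uᵀ) *ᵥ x) = ∑ i, g i * f i := by
  have hnorm : x ⬝ᵥ x = ∑ i, (Uᵀ *ᵥ x) i ^ 2 := by
    simpa [hU] using dotProduct_mulVec_mul_diagonal_mul_transpose U 1 x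
  have hpos : 0 < x ⬝ᵥ x :=
    (by simpa using dotProduct_star_self_nonneg x : 0 ≤ x ⬝ᵥ x).lt_of_ne'
      (dotProduct_self_eq_zero.not.mpr hx)
  refine ⟨fun i => (Uᵀ *ᵥ x) i ^ 2 / (x ⬝ᵥ x), fun i => by positivity, ?_, ?_⟩
  · rw [← Finset.sum_div, ← hnorm, div_self hpos.ne']
  · rw [dotProduct_mulVec_mul_diagonal_mul_transpose, Finset.mul_sum]
    exact Finset.sum_congr rfl fun i _ => by ring

namespace Matrix.IsHermitian

variable [DecidableEq n] {B : Matrix n n ℝ} (hB : B.IsHermitian)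
include hB

lemma eigenvectorUnitary_mul_transpose :
    (hB.eigenvectorUnitary : Matrix n n ℝ) * (hB.eigenvectorUnitary : Matrix n n ℝ)ᵀ = 1 := by
  simpa [star_eq_conjTranspose, conjTranspose_eq_transpose_of_trivial] using
    Unitary.coe_mul_star_self hB.eigenvectorUnitary

lemma eq_mul_diagonal_mul_transpose :
    B = (hB.eigenvectorUnitary : Matrix n n ℝ) * diagonal hB.eigenvalues *
      (hB.eigenvectorUnitary : Matrix n n ℝ)ᵀ := by
  conv_lhs => rw [hB.spectral_theorem]
  simp [star_eq_conjTranspose, conjTranspose_eq_transpose_of_trivial]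

lemma inv_eq_mul_diagonal_inv_mul_transpose (hμ : ∀ i, hB.eigenvalues i ≠ 0) :
    B⁻¹ = (hB.eigenvectorUnitary : Matrix n n ℝ) * diagonal (fun i => (hB.eigenvalues i)⁻¹) *
      (hB.eigenvectorUnitary : Matrix n n ℝ)ᵀ := by
  set U : Matrix n n ℝ := ↑hB.eigenvectorUnitary
  set μ := hB.eigenvalues
  have hUtU : Uᵀ * U = 1 := mul_eq_one_comm.mp hB.eigenvectorUnitary_mul_transpose
  have hdiag : diagonal (fun i => (μ i)⁻¹) * diagonal μ = 1 := by
    rw [diagonal_mul_diagonal, ← diagonal_one]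
    exact congrArg diagonal (funext fun i => inv_mul_cancel₀ (hμ i))
  refine inv_eq_left_inv ?_
  calc U * diagonal (fun i => (μ i)⁻¹) * Uᵀ * B
      = U * diagonal (fun i => (μ i)⁻¹) * Uᵀ * (U * diagonal μ * Uᵀ) :=
        congrArg _ hB.eq_mul_diagonal_mul_transpose
    _ = U * (diagonal (fun i => (μ i)⁻¹) * (Uᵀ * U) * diagonal μ) * Uᵀ := by
        simp only [Matrix.mul_assoc]
    _ = 1 := by
        rw [hUtU, Matrix.mul_one, hdiag, Matrix.mul_one, hB.eigenvectorUnitary_mul_transpose]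

end Matrix.IsHermitian

end Spectral

theorem stmt2_general (v d : ℕ) (C W : Matrix (Fin v) (Fin v) ℝ) (hC : C.PosSemidef)
    (hcol : colSpace W ≤ colSpace C)
    (K : Matrix (Fin v) (Fin d) ℝ) (hKrank : K.rank = d) (hKW : K * Kᵀ = W)
    (Cp : Matrix (Fin v) (Fin v) ℝ) (hCp : IsMPInv C Cp)
    (Wp : Matrix (Fin v) (Fin v) ℝ) (hWp : IsMPInv W Wp) :
    ∃ hPD : (Kᵀ * Cp * K).PosDef,
      ∀ q : Fin v → ℝ, q ∈ colSpace W → q ≠ 0 →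
        ∃ g : Fin d → ℝ, (∀ i, 0 ≤ g i) ∧ (∑ i, g i = 1) ∧
          (q ⬝ᵥ Wp *ᵥ q)⁻¹ * (q ⬝ᵥ Cp *ᵥ q) =
            ∑ i, g i * ((Matrix.IsHermitian.inv hPD.1).eigenvalues i)⁻¹ := by
  have hK : Function.Injective K.mulVec :=
    K.mulVec_injective_of_rank_eq_card (by rw [hKrank, Fintype.card_fin])
  have hKC : colSpace K ≤ colSpace C := by
    rwa [← colSpace_mul_transpose_self, hKW]
  have hPD := posDef_transpose_mul_mul_of_colSpace_le hC hCp.1 hK hKC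
  refine ⟨hPD, fun q hq hq0 => ?_⟩
  obtain ⟨x, rfl⟩ : ∃ x, q = K *ᵥ x := by
    obtain ⟨y, rfl⟩ := hq
    exact ⟨Kᵀ *ᵥ y, by rw [mulVecLin_apply, mulVec_mulVec, hKW]⟩
  have hx : x ≠ 0 := by
    rintro rfl
    exact hq0 (mulVec_zero K)
  have hB := hPD.1.inv
  obtain ⟨g, hg0, hg1, hg⟩ := exists_convex_weights_dotProduct_mulVec
    hB.eigenvectorUnitary_mul_transpose (fun i => (hB.eigenvalues i)⁻¹) hx
  refine ⟨g, hg0, hg1, ?_⟩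
  rw [← hg, ← hB.inv_eq_mul_diagonal_inv_mul_transpose fun i => (hPD.inv.eigenvalues_pos i).ne',
    nonsing_inv_nonsing_inv _ ((isUnit_iff_isUnit_det _).mp hPD.isUnit),
    mulVec_dotProduct_mulVec_mulVec, mulVec_dotProduct_mulVec_mulVec,
    transpose_mul_mul_eq_one_of_mul_transpose_mul hK (hKW ▸ hWp.1), one_mulVec]

theorem stmt2 (v d : ℕ) (C W : Matrix (Fin v) (Fin v) ℝ) (hC : C.PosSemidef) (hW : W.PosSemidef)
    (hWrank : W.rank = d) (hcol : colSpace W ≤ colSpace C)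
    (K : Matrix (Fin v) (Fin d) ℝ) (hKrank : K.rank = d) (hKW : K * Kᵀ = W)
    (Cp : Matrix (Fin v) (Fin v) ℝ) (hCp : IsMPInv C Cp)
    (Wp : Matrix (Fin v) (Fin v) ℝ) (hWp : IsMPInv W Wp) :
    ∃ hPD : (Kᵀ * Cp * K).PosDef,
      ∀ q : Fin v → ℝ, q ∈ colSpace W → q ≠ 0 →
        ∃ g : Fin d → ℝ, (∀ i, 0 ≤ g i) ∧ (∑ i, g i = 1) ∧
          (q ⬝ᵥ Wp *ᵥ q)⁻¹ * (q ⬝ᵥ Cp *ᵥ q) =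
            ∑ i, g i * ((Matrix.IsHermitian.inv hPD.1).eigenvalues i)⁻¹ :=
  stmt2_general v d C W hC hcol K hKrank hKW Cp hCp Wp hWp
end

section
/- Let Q be a v×s real matrix, let S be the column space of Q, and let P be the orthogonal projection matrix onto S. Then for every q ∈ S, one has qᵀ (QQᵀ)⁺ q = qᵀ (I_v − P + QQᵀ)^{−1} q; that is, the weight matrices W₁ = QQᵀ and W₂ = I_v − P + QQᵀ are estimation equivalent with constant c = 1. -/
open Matrix

lemma col_mem_colSpace {m n : ℕ} (A : Matrix (Fin m) (Fin n) ℝ) (j : Fin n) :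
    (fun i => A i j) ∈ colSpace A := by
  refine ⟨Pi.single j 1, ?_⟩
  ext i
  simp [mulVecLin, mulVec, dotProduct, Pi.single_apply, mul_ite]

lemma colfix {m n : ℕ} {P : Matrix (Fin m) (Fin m) ℝ} {A : Matrix (Fin m) (Fin n) ℝ}
    (h : ∀ j, P *ᵥ (fun i => A i j) = fun i => A i j) : P * A = A := by
  ext i j
  have := congrFun (h j) i
  simpa [mulVec, dotProduct, mul_apply] using this

lemma real_AAt_zero {m n : ℕ} {A : Matrix (Fin m) (Fin n) ℝ} (h : A * Aᵀ = 0) : A = 0 := by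
  have : A * Aᴴ = 0 := by simpa using h
  exact Matrix.self_mul_conjTranspose_eq_zero.mp this

theorem stmt4 (v s : ℕ) (Q : Matrix (Fin v) (Fin s) ℝ)
    (P : Matrix (Fin v) (Fin v) ℝ) (hPsymm : Pᵀ = P) (hPidem : P * P = P)
    (hPrange : colSpace P = colSpace Q)
    (Wp : Matrix (Fin v) (Fin v) ℝ) (hWp : IsMPInv (Q * Qᵀ) Wp) :
    ∀ q ∈ colSpace Q, q ⬝ᵥ Wp *ᵥ q = q ⬝ᵥ (1 - P + Q * Qᵀ)⁻¹ *ᵥ q := by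
  obtain ⟨h1, h2, h3, h4⟩ := hWp
  set M : Matrix (Fin v) (Fin v) ℝ := Q * Qᵀ with hM
  clear_value M
  have hMsymm : Mᵀ = M := by rw [hM, transpose_mul, transpose_transpose]
  -- vectors in colSpace P are fixed by P
  have hfixP : ∀ x ∈ colSpace P, P *ᵥ x = x := by
    rintro x ⟨y, rfl⟩
    show P *ᵥ (P *ᵥ y) = P *ᵥ y
    rw [mulVec_mulVec, hPidem]
  have hfixQ : ∀ x ∈ colSpace Q, P *ᵥ x = x := fun x hx => hfixP x (hPrange ▸ hx)
  have hPQ : P * Q = Q := colfix fun j => hfixQ _ (col_mem_colSpace Q j)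
  have hPM : P * M = M := by rw [hM, ← Matrix.mul_assoc, hPQ]
  have hMP : M * P = M := by
    have := congrArg transpose hPM
    rwa [transpose_mul, hMsymm, hPsymm] at this
  -- basic transpose facts about Wp
  have hE' : Wpᵀ * M = M * Wp := by
    have := h3
    rwa [transpose_mul, hMsymm] at this
  have hMWpT : M * Wpᵀ = Wp * M := by
    have := h4
    rwa [transpose_mul, hMsymm] at this
  have hMWptM : M * (Wpᵀ * M) = M := by
    have := congrArg transpose h1
    rwa [transpose_mul, transpose_mul, hMsymm] at this
  have hME : M * (M * Wp) = M := by rw [← hE']; exact hMWptM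
  have h2t : Wpᵀ * (Wp * M) = Wpᵀ := by
    have := congrArg transpose h2
    rwa [transpose_mul, transpose_mul, hMsymm, hMWpT] at this
  set E : Matrix (Fin v) (Fin v) ℝ := M * Wp with hEdef
  clear_value E
  -- now h1 : E * M = M, h3 : Eᵀ = E, hME : M * E = M
  have hEtr : (1 - E)ᵀ = 1 - E := by rw [transpose_sub, transpose_one, h3]
  -- (1 - E) * Q = 0
  have hzero : ((1 - E) * Q) * ((1 - E) * Q)ᵀ = 0 := by
    rw [transpose_mul, hEtr]
    calc (1 - E) * Q * (Qᵀ * (1 - E))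
        = (1 - E) * (Q * (Qᵀ * (1 - E))) := Matrix.mul_assoc _ _ _
      _ = (1 - E) * (Q * Qᵀ * (1 - E)) := by rw [Matrix.mul_assoc]
      _ = (1 - E) * (M * (1 - E)) := by rw [← hM]
      _ = (1 - E) * (M - M * E) := by rw [Matrix.mul_sub, Matrix.mul_one]
      _ = (1 - E) * 0 := by rw [hME, sub_self]
      _ = 0 := by rw [Matrix.mul_zero]
  have hEQ : E * Q = Q := by
    have h0 := real_AAt_zero hzero
    rw [Matrix.sub_mul, Matrix.one_mul, sub_eq_zero] at h0
    exact h0.symm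
  -- E fixes colSpace Q, so E * P = P
  have hfixE : ∀ x ∈ colSpace Q, E *ᵥ x = x := by
    rintro x ⟨y, rfl⟩
    show E *ᵥ (Q *ᵥ y) = Q *ᵥ y
    rw [mulVec_mulVec, hEQ]
  have hEP : E * P = P := colfix fun j => hfixE _ (hPrange ▸ col_mem_colSpace P j)
  have hPE : P * E = E := by rw [hEdef, ← Matrix.mul_assoc, hPM]
  have hEeqP : E = P := by
    have hPE' : P * E = P := by
      have := congrArg transpose hEP
      rwa [transpose_mul, hPsymm, h3] at this
    rw [← hPE, hPE']
  -- P * Wp = Wp and Wp * P = Wp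
  have hWpP : Wp * P = Wp := by
    have hWpE : Wp * E = Wp := by
      rw [hEdef, ← Matrix.mul_assoc]; exact h2
    rw [← hEeqP]; exact hWpE
  have hPWp : P * Wp = Wp := by
    have hWtP : Wpᵀ * P = Wpᵀ := by
      calc Wpᵀ * P = Wpᵀ * (Wp * M) * P := by rw [h2t]
        _ = Wpᵀ * (Wp * (M * P)) := by rw [Matrix.mul_assoc, Matrix.mul_assoc]
        _ = Wpᵀ * (Wp * M) := by rw [hMP]
        _ = Wpᵀ := h2t
    have := congrArg transpose hWtP
    rwa [transpose_mul, hPsymm, transpose_transpose] at this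
  -- the inverse of 1 - P + M is 1 - P + Wp
  have hMWp : M * Wp = P := by rw [← hEdef, hEeqP]
  have hright : (1 - P + M) * (1 - P + Wp) = 1 := by
    have expand : (1 - P + M) * (1 - P + Wp)
        = 1 - P + Wp - P + P * P - P * Wp + M - M * P + M * Wp := by noncomm_ring
    rw [expand, hPidem, hPWp, hMP, hMWp]
    abel
  have hinv : (1 - P + M)⁻¹ = 1 - P + Wp := inv_eq_right_inv hright
  intro q hq
  rw [hinv]
  have hPq : P *ᵥ q = q := hfixQ q hq
  rw [add_mulVec, sub_mulVec, one_mulVec, hPq]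
  simp
end

section
/- Let C be a v×v real symmetric positive semidefinite matrix, let W be a v×v real symmetric positive semidefinite matrix of rank d whose column space is contained in the column space of C, and let K be a v×d real matrix of rank d with K Kᵀ = W. Let Q be any v×d real matrix with Q Qᵀ = W, with columns q_1, …, q_d. Then each column q_i is nonzero, and the average weighted variance of the functions q_1ᵀτ, …, q_dᵀτ equals (1/d)·tr(Kᵀ C⁺ K); that is, (1/d) Σ_{i=1}^d (q_iᵀ W⁺ q_i)^{−1} · (q_iᵀ C⁺ q_i) = (1/d) · tr(Kᵀ C⁺ K). -/
open Matrix

lemma entry_aux {v d : ℕ} (Q : Matrix (Fin v) (Fin d) ℝ) (M : Matrix (Fin v) (Fin v) ℝ)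
    (i : Fin d) : (Qᵀ * M * Q) i i = Qᵀ i ⬝ᵥ M *ᵥ Qᵀ i := by
  simp [Matrix.mul_apply, Matrix.mulVec, dotProduct, Finset.mul_sum, Finset.sum_mul]
  rw [Finset.sum_comm]
  simp [mul_assoc]

lemma key_aux {v d : ℕ} (W : Matrix (Fin v) (Fin v) ℝ) (Q : Matrix (Fin v) (Fin d) ℝ)
    (hWrank : W.rank = d) (hQW : Q * Qᵀ = W)
    (Wp : Matrix (Fin v) (Fin v) ℝ) (hWp1 : W * Wp * W = W) :
    Qᵀ * Wp * Q = 1 := by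
  have hQrank : Q.rank = d := by rw [← Matrix.rank_self_mul_transpose, hQW, hWrank]
  have hker : LinearMap.ker Q.mulVecLin = ⊥ := by
    have h := LinearMap.finrank_range_add_finrank_ker Q.mulVecLin
    rw [show Module.finrank ℝ (LinearMap.range Q.mulVecLin) = d from hQrank] at h
    simp only [Module.finrank_fin_fun] at h
    exact Submodule.finrank_eq_zero.mp (by omega)
  have hQinj : Function.Injective Q.mulVecLin := by
    rw [← LinearMap.ker_eq_bot]; exact hker
  set G := Qᵀ * Q with hGdef
  have hGunit : IsUnit G := by
    rw [← Matrix.mulVec_injective_iff_isUnit]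
    intro x y hxy
    apply hQinj
    have h2 : ∀ z, G *ᵥ z = Qᵀ *ᵥ (Q *ᵥ z) := fun z => by rw [hGdef, ← Matrix.mulVec_mulVec]
    have h3 : Q *ᵥ (x - y) ⬝ᵥ Q *ᵥ (x - y) = 0 := by
      have h4 : G *ᵥ (x - y) = 0 := by
        rw [Matrix.mulVec_sub, hxy, sub_self]
      have h5 : (x - y) ⬝ᵥ (G *ᵥ (x - y)) = 0 := by rw [h4, dotProduct_zero]
      rw [h2] at h5
      rwa [Matrix.dotProduct_mulVec, ← Matrix.mulVec_transpose, transpose_transpose] at h5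
    have h6 : Q *ᵥ (x - y) = 0 := by
      rwa [dotProduct_self_eq_zero] at h3
    have : Q *ᵥ x = Q *ᵥ y := by
      rw [Matrix.mulVec_sub, sub_eq_zero] at h6; exact h6
    simpa using this
  have hGdet : IsUnit G.det := (Matrix.isUnit_iff_isUnit_det G).mp hGunit
  have hGGi : G * G⁻¹ = 1 := Matrix.mul_nonsing_inv G hGdet
  have hGiG : G⁻¹ * G = 1 := Matrix.nonsing_inv_mul G hGdet
  have hGt : Gᵀ = G := by rw [hGdef, transpose_mul, transpose_transpose]
  have hGit : (G⁻¹)ᵀ = G⁻¹ := by rw [Matrix.transpose_nonsing_inv, hGt]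
  have hWt : Wᵀ = W := by rw [← hQW, transpose_mul, transpose_transpose]
  have hQeq : Q = W * Q * G⁻¹ := by
    have : Q * G = W * Q := by rw [hGdef, ← Matrix.mul_assoc, hQW]
    rw [← this, Matrix.mul_assoc Q G G⁻¹, hGGi, Matrix.mul_one]
  calc Qᵀ * Wp * Q = (W * Q * G⁻¹)ᵀ * Wp * (W * Q * G⁻¹) := by rw [← hQeq]
    _ = G⁻¹ * (Qᵀ * ((W * Wp * W) * (Q * G⁻¹))) := by
        rw [transpose_mul, transpose_mul, hGit, hWt]
        simp only [Matrix.mul_assoc]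
    _ = G⁻¹ * (Qᵀ * (W * (Q * G⁻¹))) := by rw [hWp1]
    _ = G⁻¹ * G * G * G⁻¹ := by
        rw [← hQW, hGdef]; simp only [Matrix.mul_assoc]
    _ = 1 := by rw [hGiG, Matrix.one_mul, hGGi]

theorem stmt9 (v d : ℕ) (C W : Matrix (Fin v) (Fin v) ℝ) (hC : C.PosSemidef) (hW : W.PosSemidef)
    (hWrank : W.rank = d) (hcol : colSpace W ≤ colSpace C)
    (K : Matrix (Fin v) (Fin d) ℝ) (hKrank : K.rank = d) (hKW : K * Kᵀ = W)
    (Q : Matrix (Fin v) (Fin d) ℝ) (hQW : Q * Qᵀ = W)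
    (Cp Wp : Matrix (Fin v) (Fin v) ℝ) (hCp : IsMPInv C Cp) (hWp : IsMPInv W Wp) :
    (∀ i : Fin d, Qᵀ i ≠ 0) ∧
      (1 / (d : ℝ)) * ∑ i : Fin d, (Qᵀ i ⬝ᵥ Wp *ᵥ Qᵀ i)⁻¹ * (Qᵀ i ⬝ᵥ Cp *ᵥ Qᵀ i) =
        (1 / (d : ℝ)) * Matrix.trace (Kᵀ * Cp * K) := by
  have key : Qᵀ * Wp * Q = 1 := key_aux W Q hWrank hQW Wp hWp.1
  have hone : ∀ i : Fin d, Qᵀ i ⬝ᵥ Wp *ᵥ Qᵀ i = 1 := fun i => by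
    rw [← entry_aux, key, Matrix.one_apply_eq]
  constructor
  · intro i hi
    have h := hone i
    rw [hi] at h
    simp at h
  · congr 1
    have hterm : ∀ i : Fin d,
        (Qᵀ i ⬝ᵥ Wp *ᵥ Qᵀ i)⁻¹ * (Qᵀ i ⬝ᵥ Cp *ᵥ Qᵀ i) = (Qᵀ * Cp * Q) i i := fun i => by
      rw [hone i, inv_one, one_mul, entry_aux]
    rw [Finset.sum_congr rfl (fun i _ => hterm i)]
    have e0 : (∑ i : Fin d, (Qᵀ * Cp * Q) i i) = Matrix.trace (Qᵀ * Cp * Q) := by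
      simp [Matrix.trace, Matrix.diag]
    have e1 : Matrix.trace (Qᵀ * Cp * Q) = Matrix.trace (Cp * W) := by
      rw [Matrix.mul_assoc, Matrix.trace_mul_comm, Matrix.mul_assoc, hQW]
    have e2 : Matrix.trace (Kᵀ * Cp * K) = Matrix.trace (Cp * W) := by
      rw [Matrix.mul_assoc, Matrix.trace_mul_comm, Matrix.mul_assoc, hKW]
    rw [e0, e1, e2]
end

section
/- Let C be a v×v real symmetric positive semidefinite matrix, let W be a v×v real symmetric positive semidefinite matrix of rank d whose column space is contained in the column space of C, and let K be a v×d real matrix of rank d with K Kᵀ = W. Let q_1, …, q_d be nonzero vectors in the column space of W that are mutually W-orthogonal, i.e., q_iᵀ W⁺ q_j = 0 for all i ≠ j. Then the average weighted variance of the functions q_1ᵀτ, …, q_dᵀτ equals (1/d)·tr(Kᵀ C⁺ K); that is, (1/d) Σ_{i=1}^d (q_iᵀ W⁺ q_i)^{−1} · (q_iᵀ C⁺ q_i) = (1/d) · tr(Kᵀ C⁺ K). -/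
open Matrix

private lemma dot_conj {v d : ℕ} (K : Matrix (Fin v) (Fin d) ℝ)
    (N : Matrix (Fin v) (Fin v) ℝ) (a b : Fin d → ℝ) :
    (K *ᵥ a) ⬝ᵥ N *ᵥ (K *ᵥ b) = a ⬝ᵥ (Kᵀ * N * K) *ᵥ b := by
  rw [← mulVec_mulVec, ← mulVec_mulVec, dotProduct_comm, dotProduct_mulVec,
    dotProduct_comm, ← mulVec_transpose, mulVec_mulVec]

private lemma quad_diag {d : ℕ} (X M : Matrix (Fin d) (Fin d) ℝ) (i : Fin d) :
    (X * M * Xᵀ) i i = (fun j => X i j) ⬝ᵥ M *ᵥ (fun j => X i j) := by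
  simp only [mul_apply, transpose_apply, dotProduct, mulVec, Finset.sum_mul, Finset.mul_sum]
  rw [Finset.sum_comm]
  exact Finset.sum_congr rfl fun k _ => Finset.sum_congr rfl fun j _ => by ring

theorem stmt10 (v d : ℕ) (C W : Matrix (Fin v) (Fin v) ℝ) (hC : C.PosSemidef)
    (hW : W.PosSemidef) (hWrank : W.rank = d) (hcol : colSpace W ≤ colSpace C)
    (K : Matrix (Fin v) (Fin d) ℝ) (hKrank : K.rank = d) (hKW : K * Kᵀ = W)
    (Cp Wp : Matrix (Fin v) (Fin v) ℝ) (hCp : IsMPInv C Cp) (hWp : IsMPInv W Wp)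
    (q : Fin d → Fin v → ℝ) (hmem : ∀ i, q i ∈ colSpace W) (hne : ∀ i, q i ≠ 0)
    (horth : ∀ i j, i ≠ j → q i ⬝ᵥ Wp *ᵥ q j = 0) :
    (1 / (d : ℝ)) * ∑ i : Fin d, (q i ⬝ᵥ Wp *ᵥ q i)⁻¹ * (q i ⬝ᵥ Cp *ᵥ q i) =
      (1 / (d : ℝ)) * Matrix.trace (Kᵀ * Cp * K) := by
  -- G = KᵀK is invertible
  set G : Matrix (Fin d) (Fin d) ℝ := Kᵀ * K with hG
  have hGrank : G.rank = d := by rw [hG, Matrix.rank_transpose_mul_self]; exact hKrank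
  have hGunit : IsUnit G := by
    rw [← Matrix.mulVec_surjective_iff_isUnit]
    have htop : LinearMap.range G.mulVecLin = ⊤ := by
      apply Submodule.eq_top_of_finrank_eq
      rw [Module.finrank_pi]
      simpa [Matrix.rank] using hGrank
    intro y
    obtain ⟨x, hx⟩ := htop ▸ Submodule.mem_top (x := y)
    exact ⟨x, hx⟩
  have hGdet : IsUnit G.det := (Matrix.isUnit_iff_isUnit_det G).mp hGunit
  -- Kᵀ Wp K = 1
  have h1 : Kᵀ * (W * Wp * W) * K = Kᵀ * W * K := by rw [hWp.1]
  rw [← hKW] at h1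
  have h2 : G * ((Kᵀ * Wp * K) * G) = G * (1 * G) := by
    rw [one_mul, hG]
    simp only [Matrix.mul_assoc] at h1 ⊢
    exact h1
  have hKWpK : Kᵀ * Wp * K = 1 :=
    hGunit.mul_right_cancel (hGunit.mul_left_cancel h2)
  -- write q i = K *ᵥ x i
  have hmem' : ∀ i, ∃ x : Fin d → ℝ, K *ᵥ x = q i := by
    intro i
    obtain ⟨y, hy⟩ := hmem i
    exact ⟨Kᵀ *ᵥ y, by rw [mulVec_mulVec, hKW]; simpa [Matrix.mulVecLin_apply] using hy⟩
  choose x hx using hmem'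
  have hdotW : ∀ i j, q i ⬝ᵥ Wp *ᵥ q j = x i ⬝ᵥ x j := by
    intro i j
    rw [← hx i, ← hx j, dot_conj, hKWpK, one_mulVec]
  set M : Matrix (Fin d) (Fin d) ℝ := Kᵀ * Cp * K with hM
  have hdotC : ∀ i, q i ⬝ᵥ Cp *ᵥ q i = x i ⬝ᵥ M *ᵥ x i := by
    intro i; rw [← hx i, dot_conj]
  set r : Fin d → ℝ := fun i => x i ⬝ᵥ x i with hr
  have hrne : ∀ i, r i ≠ 0 := by
    intro i h
    have hx0 : x i = 0 := dotProduct_self_eq_zero.mp h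
    exact hne i (by rw [← hx i, hx0, mulVec_zero])
  set X : Matrix (Fin d) (Fin d) ℝ := Matrix.of x with hX
  have hXXt : X * Xᵀ = Matrix.diagonal r := by
    ext i j
    have : (X * Xᵀ) i j = x i ⬝ᵥ x j := by
      simp [hX, mul_apply, dotProduct]
    rw [this, Matrix.diagonal_apply]
    by_cases hij : i = j
    · simp [hij, hr]
    · rw [if_neg hij, ← hdotW, horth i j hij]
  set c : Fin d → ℝ := fun i => (r i)⁻¹ with hc
  have hdiag : X * Xᵀ * Matrix.diagonal c = 1 := by
    rw [hXXt, Matrix.diagonal_mul_diagonal]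
    ext i j
    by_cases hij : i = j
    · subst hij
      simp [Matrix.diagonal_apply_eq, hc, mul_inv_cancel₀ (hrne i), Matrix.one_apply_eq]
    · simp [Matrix.diagonal_apply_ne _ hij, Matrix.one_apply_ne hij]
  have hinv : Xᵀ * (Matrix.diagonal c * X) = 1 := by
    have h4 : X * (Xᵀ * Matrix.diagonal c) = 1 := by rw [← Matrix.mul_assoc]; exact hdiag
    have h5 := mul_eq_one_comm.mp h4
    rwa [Matrix.mul_assoc] at h5
  congr 1
  calc ∑ i : Fin d, (q i ⬝ᵥ Wp *ᵥ q i)⁻¹ * (q i ⬝ᵥ Cp *ᵥ q i)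
      = ∑ i : Fin d, c i * (X * M * Xᵀ) i i := by
        apply Finset.sum_congr rfl
        intro i _
        rw [hdotW, hdotC, quad_diag]
        rfl
    _ = Matrix.trace (Matrix.diagonal c * (X * M * Xᵀ)) := by
        simp [Matrix.trace, Matrix.diag, Matrix.diagonal_mul]
    _ = Matrix.trace ((Matrix.diagonal c * X * M) * Xᵀ) := by
        simp only [Matrix.mul_assoc]
    _ = Matrix.trace (Xᵀ * (Matrix.diagonal c * X * M)) := Matrix.trace_mul_comm _ _
    _ = Matrix.trace (Xᵀ * (Matrix.diagonal c * X) * M) := by simp only [Matrix.mul_assoc]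
    _ = Matrix.trace M := by rw [hinv, Matrix.one_mul]
    _ = Matrix.trace (Kᵀ * Cp * K) := rfl
end

section
/- Let Q be a v×s real matrix with columns q_1, …, q_s, let b_1, …, b_s be strictly positive reals, let B = diag(b_1, …, b_s), and set W̃ = Q B Qᵀ. Then for each i = 1, …, s, one has b_i · (q_iᵀ W̃⁺ q_i) ≤ 1 (equivalently, whenever q_i ≠ 0, the secondary weight (q_iᵀ W̃⁺ q_i)^{−1} is at least the primary weight b_i). Moreover, if q_i can be expressed as a linear combination of the other columns q_j, j ≠ i, then the inequality is strict: b_i · (q_iᵀ W̃⁺ q_i) < 1. -/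
open Matrix

/-- Uniqueness of the Moore–Penrose pseudoinverse. -/
lemma mpinv_unique' {m n : ℕ} {A : Matrix (Fin m) (Fin n) ℝ}
    {B C : Matrix (Fin n) (Fin m) ℝ}
    (hB1 : A * B * A = A) (hB2 : B * A * B = B) (hB3 : (A * B)ᵀ = A * B) (hB4 : (B * A)ᵀ = B * A)
    (hC1 : A * C * A = A) (hC2 : C * A * C = C) (hC3 : (A * C)ᵀ = A * C) (hC4 : (C * A)ᵀ = C * A) :
    B = C := by
  have hAB : A * B = A * C := by
    calc A * B = (A * C * A) * B := by rw [hC1]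
    _ = (A * C) * (A * B) := by rw [Matrix.mul_assoc]
    _ = (A * C)ᵀ * (A * B)ᵀ := by rw [hC3, hB3]
    _ = Cᵀ * ((A * B * A)ᵀ) := by simp [Matrix.transpose_mul, Matrix.mul_assoc]
    _ = Cᵀ * Aᵀ := by rw [hB1]
    _ = (A * C)ᵀ := by rw [Matrix.transpose_mul]
    _ = A * C := hC3
  have hBA : B * A = C * A := by
    calc B * A = B * (A * C * A) := by rw [hC1]
    _ = (B * A) * (C * A) := by simp [Matrix.mul_assoc]
    _ = (B * A)ᵀ * (C * A)ᵀ := by rw [hB4, hC4]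
    _ = ((A * B * A)ᵀ) * Cᵀ := by simp [Matrix.transpose_mul, Matrix.mul_assoc]
    _ = Aᵀ * Cᵀ := by rw [hB1]
    _ = (C * A)ᵀ := by rw [Matrix.transpose_mul]
    _ = C * A := hC4
  calc B = B * A * B := hB2.symm
  _ = B * (A * C) := by rw [Matrix.mul_assoc, hAB]
  _ = (C * A) * C := by rw [← Matrix.mul_assoc, hBA]
  _ = C := hC2

theorem stmt11 (v s : ℕ) (Q : Matrix (Fin v) (Fin s) ℝ)
    (b : Fin s → ℝ) (hb : ∀ i, 0 < b i)
    (Wtp : Matrix (Fin v) (Fin v) ℝ) (hWtp : IsMPInv (Q * Matrix.diagonal b * Qᵀ) Wtp) :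
    (∀ i : Fin s, b i * (Qᵀ i ⬝ᵥ Wtp *ᵥ Qᵀ i) ≤ 1) ∧
      ∀ i : Fin s, (∃ α : Fin s → ℝ, Qᵀ i = ∑ j ∈ Finset.univ.erase i, α j • Qᵀ j) →
        b i * (Qᵀ i ⬝ᵥ Wtp *ᵥ Qᵀ i) < 1 := by
  obtain ⟨h1, h2, h3, h4⟩ := hWtp
  set W := Q * Matrix.diagonal b * Qᵀ with hW
  have hWsym : Wᵀ = W := by
    rw [hW]; simp [Matrix.transpose_mul, Matrix.mul_assoc]
  have e1 : W * Wtpᵀ * W = W := by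
    calc W * Wtpᵀ * W = (Wᵀ * Wtp * Wᵀ)ᵀ := by
          simp [Matrix.transpose_mul, Matrix.mul_assoc]
    _ = (W * Wtp * W)ᵀ := by rw [hWsym]
    _ = Wᵀ := by rw [h1]
    _ = W := hWsym
  have e2 : Wtpᵀ * W * Wtpᵀ = Wtpᵀ := by
    calc Wtpᵀ * W * Wtpᵀ = (Wtp * Wᵀ * Wtp)ᵀ := by
          simp [Matrix.transpose_mul, Matrix.mul_assoc]
    _ = (Wtp * W * Wtp)ᵀ := by rw [hWsym]
    _ = Wtpᵀ := by rw [h2]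
  have e3 : (W * Wtpᵀ)ᵀ = W * Wtpᵀ := by
    have h : W * Wtpᵀ = (Wtp * Wᵀ)ᵀ := by simp [Matrix.transpose_mul]
    rw [h, hWsym, h4]; exact h4
  have e4 : (Wtpᵀ * W)ᵀ = Wtpᵀ * W := by
    have h : Wtpᵀ * W = (Wᵀ * Wtp)ᵀ := by simp [Matrix.transpose_mul]
    rw [h, hWsym, h3]; exact h3
  have hsym : Wtpᵀ = Wtp := mpinv_unique' e1 e2 e3 e4 h1 h2 h3 h4
  -- the key identity
  have key : ∀ i : Fin s, Qᵀ i ⬝ᵥ Wtp *ᵥ Qᵀ i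
      = ∑ j, b j * ((Qᵀ *ᵥ (Wtp *ᵥ Qᵀ i)) j)^2 := by
    intro i
    set q := Qᵀ i with hq
    set c := Wtp *ᵥ q with hc
    have hcv : c = q ᵥ* Wtp := by rw [hc, ← hsym, Matrix.mulVec_transpose, hsym]
    have stepA : q ⬝ᵥ c = c ⬝ᵥ (W *ᵥ c) := by
      calc q ⬝ᵥ c = (q ᵥ* Wtp) ⬝ᵥ q := by rw [hc, Matrix.dotProduct_mulVec]
      _ = (q ᵥ* (Wtp * W * Wtp)) ⬝ᵥ q := by rw [h2]
      _ = ((q ᵥ* Wtp) ᵥ* (W * Wtp)) ⬝ᵥ q := by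
            rw [Matrix.vecMul_vecMul, Matrix.mul_assoc]
      _ = (c ᵥ* (W * Wtp)) ⬝ᵥ q := by rw [← hcv]
      _ = c ⬝ᵥ ((W * Wtp) *ᵥ q) := by rw [Matrix.dotProduct_mulVec]
      _ = c ⬝ᵥ (W *ᵥ c) := by rw [hc]; exact congrArg _ (Matrix.mulVec_mulVec q W Wtp).symm
    rw [stepA]
    have hWc : W *ᵥ c = Q *ᵥ (Matrix.diagonal b *ᵥ (Qᵀ *ᵥ c)) := by
      simp only [hW, hc, Matrix.mulVec_mulVec, Matrix.mul_assoc]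
    rw [hWc, Matrix.dotProduct_mulVec]
    have hcQ : c ᵥ* Q = Qᵀ *ᵥ c := (Matrix.mulVec_transpose Q c).symm
    rw [hcQ]
    simp only [dotProduct, Matrix.mulVec_diagonal]
    exact Finset.sum_congr rfl (fun j _ => by ring)
  have hdiag : ∀ i : Fin s, (Qᵀ *ᵥ (Wtp *ᵥ Qᵀ i)) i = Qᵀ i ⬝ᵥ Wtp *ᵥ Qᵀ i := fun i => rfl
  have hnn : ∀ i : Fin s, 0 ≤ Qᵀ i ⬝ᵥ Wtp *ᵥ Qᵀ i := by
    intro i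
    rw [key i]
    exact Finset.sum_nonneg fun j _ => mul_nonneg (hb j).le (sq_nonneg _)
  have hge : ∀ i : Fin s,
      b i * (Qᵀ i ⬝ᵥ Wtp *ᵥ Qᵀ i)^2 ≤ Qᵀ i ⬝ᵥ Wtp *ᵥ Qᵀ i := by
    intro i
    conv_rhs => rw [key i]
    rw [← hdiag i]
    exact Finset.single_le_sum (f := fun j => b j * ((Qᵀ *ᵥ (Wtp *ᵥ Qᵀ i)) j)^2)
      (fun j _ => mul_nonneg (hb j).le (sq_nonneg _)) (Finset.mem_univ i)
  constructor
  · intro i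
    rcases (hnn i).eq_or_lt with h | h
    · rw [← h]; norm_num
    · nlinarith [hge i, hb i]
  · rintro i ⟨α, hα⟩
    by_contra hcon
    push_neg at hcon
    set t := Qᵀ i ⬝ᵥ Wtp *ᵥ Qᵀ i with ht
    set c := Wtp *ᵥ Qᵀ i with hc
    have htpos : 0 < t := by nlinarith [hnn i, hb i]
    have heq : b i * t^2 = t := le_antisymm (hge i) (by nlinarith)
    have hdi : (Qᵀ *ᵥ c) i = t := rfl
    have hk : t = b i * ((Qᵀ *ᵥ c) i)^2
        + ∑ j ∈ Finset.univ.erase i, b j * ((Qᵀ *ᵥ c) j)^2 := by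
      rw [ht, hc, key i]
      exact (Finset.add_sum_erase Finset.univ
        (fun j => b j * ((Qᵀ *ᵥ (Wtp *ᵥ Qᵀ i)) j)^2) (Finset.mem_univ i)).symm
    have hzero : ∑ j ∈ Finset.univ.erase i, b j * ((Qᵀ *ᵥ c) j)^2 = 0 := by
      rw [hdi] at hk
      linarith
    have hdzero : ∀ j ∈ Finset.univ.erase i, (Qᵀ *ᵥ c) j = 0 := by
      intro j hj
      have := (Finset.sum_eq_zero_iff_of_nonneg
        (fun k _ => mul_nonneg (hb k).le (sq_nonneg ((Qᵀ *ᵥ c) k)))).mp hzero j hj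
      have hbj := (hb j).ne'
      have : ((Qᵀ *ᵥ c) j)^2 = 0 := by
        rcases mul_eq_zero.mp this with h | h
        · exact absurd h hbj
        · exact h
      exact pow_eq_zero_iff (by norm_num) |>.mp this
    have ht0 : t = 0 := by
      have : t = ∑ j ∈ Finset.univ.erase i, α j * ((Qᵀ *ᵥ c) j) := by
        rw [ht, hα]
        simp only [dotProduct, Finset.sum_apply, Pi.smul_apply, smul_eq_mul,
          Finset.sum_mul, Matrix.mulVec, dotProduct]
        rw [Finset.sum_comm]
        exact Finset.sum_congr rfl fun j _ => by
          rw [Finset.mul_sum]; exact Finset.sum_congr rfl fun k _ => by ring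
      rw [this]
      exact Finset.sum_eq_zero fun j hj => by rw [hdzero j hj, mul_zero]
    linarith
end

section
/- Let A and B be v×v real symmetric positive semidefinite matrices with equal column spaces, C(A) = C(B). Then the Moore–Penrose pseudoinverse of their product satisfies the reverse-order law: (A B)⁺ = B⁺ A⁺. -/
open Matrix

/-!
Both `A⁺A` and `AA⁺` are the orthogonal projection onto `C(A)` when `A` is symmetric, and `BB⁺`
is the orthogonal projection onto `C(B) = C(A)`; hence `A⁺A = BB⁺`. Under this single identity
the four Penrose equations for `B⁺A⁺` as a pseudoinverse of `AB` reduce to those of `A⁺` and `B⁺`,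
and uniqueness of the pseudoinverse gives `(AB)⁺ = B⁺A⁺`.
-/

namespace IsMPInv

variable {m n k : ℕ}

theorem unique_s12 {M : Matrix (Fin m) (Fin n) ℝ} {X Y : Matrix (Fin n) (Fin m) ℝ}
    (hX : IsMPInv M X) (hY : IsMPInv M Y) : X = Y := by
  obtain ⟨hX1, hX2, hX3, hX4⟩ := hX
  obtain ⟨hY1, hY2, hY3, hY4⟩ := hY
  have hMX : M * X = M * Y := by
    calc M * X = (M * Y)ᵀ * (M * X)ᵀ := by rw [hY3, hX3, ← Matrix.mul_assoc, hY1]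
      _ = (M * X * M * Y)ᵀ := by simp only [transpose_mul, Matrix.mul_assoc]
      _ = M * Y := by rw [hX1, hY3]
  have hXM : X * M = Y * M := by
    calc X * M = (X * M)ᵀ * (Y * M)ᵀ := by
          rw [hX4, hY4, Matrix.mul_assoc X, ← Matrix.mul_assoc M, hY1]
      _ = (Y * (M * X * M))ᵀ := by simp only [transpose_mul, Matrix.mul_assoc]
      _ = Y * M := by rw [hX1, hY4]
  calc X = X * M * X := hX2.symm
    _ = Y * M * Y := by rw [Matrix.mul_assoc, hMX, ← Matrix.mul_assoc, hXM]
    _ = Y := hY2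

theorem transpose_s12 {A : Matrix (Fin m) (Fin n) ℝ} {Ap : Matrix (Fin n) (Fin m) ℝ}
    (h : IsMPInv A Ap) : IsMPInv Aᵀ Apᵀ := by
  obtain ⟨h1, h2, h3, h4⟩ := h
  refine ⟨?_, ?_, ?_, ?_⟩
  · rw [← transpose_mul, ← transpose_mul, ← Matrix.mul_assoc, h1]
  · rw [← transpose_mul, ← transpose_mul, ← Matrix.mul_assoc, h2]
  · rw [← transpose_mul, transpose_transpose, h4]
  · rw [← transpose_mul, transpose_transpose, h3]

theorem transpose_eq_self {A Ap : Matrix (Fin n) (Fin n) ℝ} (hA : Aᵀ = A)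
    (h : IsMPInv A Ap) : Apᵀ = Ap :=
  (hA ▸ h.transpose_s12).unique_s12 h

theorem pinv_mul_comm {A Ap : Matrix (Fin n) (Fin n) ℝ} (hA : Aᵀ = A)
    (h : IsMPInv A Ap) : Ap * A = A * Ap := by
  rw [← h.2.2.2, transpose_mul, hA, h.transpose_eq_self hA]

theorem mul_pinv_mul_of_colSpace_le {A : Matrix (Fin m) (Fin n) ℝ}
    {Ap : Matrix (Fin n) (Fin m) ℝ} (h : IsMPInv A Ap) {B : Matrix (Fin m) (Fin k) ℝ}
    (hBA : colSpace B ≤ colSpace A) : A * Ap * B = B := by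
  refine ext_iff_mulVec.mpr fun x => ?_
  obtain ⟨y, hy⟩ := hBA ⟨x, rfl⟩
  simp only [mulVecLin_apply] at hy
  rw [← mulVec_mulVec, ← hy, mulVec_mulVec, h.1]

theorem mul_pinv_eq_of_colSpace_eq {A : Matrix (Fin m) (Fin n) ℝ}
    {Ap : Matrix (Fin n) (Fin m) ℝ} {B : Matrix (Fin m) (Fin k) ℝ}
    {Bp : Matrix (Fin k) (Fin m) ℝ} (hAp : IsMPInv A Ap) (hBp : IsMPInv B Bp)
    (hcol : colSpace A = colSpace B) : A * Ap = B * Bp := by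
  have hPQ : A * Ap * (B * Bp) = B * Bp := by
    rw [← Matrix.mul_assoc, hAp.mul_pinv_mul_of_colSpace_le hcol.ge]
  have hQP : B * Bp * (A * Ap) = A * Ap := by
    rw [← Matrix.mul_assoc, hBp.mul_pinv_mul_of_colSpace_le hcol.le]
  rw [← hQP, ← hAp.2.2.1, ← hBp.2.2.1, ← transpose_mul, hPQ]

theorem mul_of_pinv_mul_eq_mul_pinv {A : Matrix (Fin m) (Fin n) ℝ}
    {Ap : Matrix (Fin n) (Fin m) ℝ} {B : Matrix (Fin n) (Fin k) ℝ}
    {Bp : Matrix (Fin k) (Fin n) ℝ} (hAp : IsMPInv A Ap) (hBp : IsMPInv B Bp)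
    (hAB : Ap * A = B * Bp) : IsMPInv (A * B) (Bp * Ap) := by
  have hleft : A * B * (Bp * Ap) = A * Ap := by
    calc A * B * (Bp * Ap) = A * (Ap * A) * Ap := by simp only [hAB, Matrix.mul_assoc]
      _ = A * Ap := by rw [← Matrix.mul_assoc, hAp.1]
  have hright : Bp * Ap * (A * B) = Bp * B := by
    calc Bp * Ap * (A * B) = Bp * (B * Bp) * B := by simp only [← hAB, Matrix.mul_assoc]
      _ = Bp * B := by rw [← Matrix.mul_assoc, hBp.2.1]
  refine ⟨?_, ?_, ?_, ?_⟩
  · rw [Matrix.mul_assoc (A * B), hright, Matrix.mul_assoc, ← Matrix.mul_assoc B, hBp.1]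
  · rw [hright, ← Matrix.mul_assoc, hBp.2.1]
  · rw [hleft, hAp.2.2.1]
  · rw [hright, hBp.2.2.2]

end IsMPInv

theorem stmt12_general (v : ℕ) (A B : Matrix (Fin v) (Fin v) ℝ)
    (hA : A.PosSemidef) (hcol : colSpace A = colSpace B)
    (Ap Bp ABp : Matrix (Fin v) (Fin v) ℝ)
    (hAp : IsMPInv A Ap) (hBp : IsMPInv B Bp) (hABp : IsMPInv (A * B) ABp) :
    ABp = Bp * Ap := by
  have hAsymm : Aᵀ = A := (isHermitian_iff_isSymm.mp hA.1).eq
  have hAB : Ap * A = B * Bp := by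
    rw [hAp.pinv_mul_comm hAsymm, hAp.mul_pinv_eq_of_colSpace_eq hBp hcol]
  exact hABp.unique_s12 (hAp.mul_of_pinv_mul_eq_mul_pinv hBp hAB)

theorem stmt12 (v : ℕ) (A B : Matrix (Fin v) (Fin v) ℝ)
    (hA : A.PosSemidef) (hB : B.PosSemidef) (hcol : colSpace A = colSpace B)
    (Ap Bp ABp : Matrix (Fin v) (Fin v) ℝ)
    (hAp : IsMPInv A Ap) (hBp : IsMPInv B Bp) (hABp : IsMPInv (A * B) ABp) :
    ABp = Bp * Ap :=
  stmt12_general v A B hA hcol Ap Bp ABp hAp hBp hABp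
end
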